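/- Let P be a strictly stochastically transitive distribution on S_n. Then the map σ*_P defined by σ*_P(i) = 1 + Σ_{j≠i} 𝟙{p_{i,j} < 1/2} (the Copeland ranking) is a permutation of {1,...,n}. -/
import Mathlib


open Finset
open scoped Classical

/-- Pairwise marginal `p_{i,j} = P(σ(i) < σ(j))`. -/
def pairwiseMarginal {n : ℕ} (P : Equiv.Perm (Fin n) → ℝ) (i j : Fin n) : ℝ :=
  ∑ σ : Equiv.Perm (Fin n), if σ i < σ j then P σ else 0

/-- Copeland rank: `σ*_P(i) = 1 + #{j ≠ i : p_{i,j} < 1/2}`. -/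
noncomputable def copelandRank {n : ℕ} (P : Equiv.Perm (Fin n) → ℝ)
    (i : Fin n) : ℕ :=
  1 + (Finset.univ.filter (fun j => j ≠ i ∧ pairwiseMarginal P i j < 1 / 2)).card

lemma marg_add {n : ℕ} (P : Equiv.Perm (Fin n) → ℝ)
    (hP1 : ∑ σ : Equiv.Perm (Fin n), P σ = 1) {i j : Fin n} (h : i ≠ j) :
    pairwiseMarginal P i j + pairwiseMarginal P j i = 1 := by
  rw [pairwiseMarginal, pairwiseMarginal, ← Finset.sum_add_distrib, ← hP1]
  refine Finset.sum_congr rfl fun σ _ => ?_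
  have hne : σ i ≠ σ j := fun e => h (σ.injective e)
  rcases hne.lt_or_gt with h1 | h1
  · simp [h1, asymm h1]
  · simp [h1, asymm h1]

/-- If `P` is strictly stochastically transitive, the Copeland ranking
`σ*_P(i) = 1 + Σ_{j≠i} 𝟙{p_{i,j} < 1/2}` is a permutation of `{1,…,n}`. -/
theorem copelandRank_is_permutation {n : ℕ} (P : Equiv.Perm (Fin n) → ℝ)
    (hP0 : ∀ σ, 0 ≤ P σ) (hP1 : ∑ σ : Equiv.Perm (Fin n), P σ = 1)
    (hST : ∀ i j k : Fin n, 1 / 2 ≤ pairwiseMarginal P i j →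
      1 / 2 ≤ pairwiseMarginal P j k → 1 / 2 ≤ pairwiseMarginal P i k)
    (hstrict : ∀ i j : Fin n, i ≠ j → pairwiseMarginal P i j ≠ 1 / 2) :
    Set.BijOn (copelandRank P) Set.univ (Set.Icc 1 n) := by
  -- "i beats j"
  set B : Fin n → Fin n → Prop := fun i j => 1 / 2 < pairwiseMarginal P i j with hB
  have hBne : ∀ {i j}, B i j → i ≠ j := by
    intro i j hij he
    subst he
    have : pairwiseMarginal P i i = 0 := by
      simp [pairwiseMarginal]
    rw [hB] at hij; simp only [this] at hij; linarith
  have htot : ∀ {i j : Fin n}, i ≠ j → (B i j ↔ pairwiseMarginal P j i < 1 / 2) := by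
    intro i j h
    have := marg_add P hP1 h
    constructor <;> intro h1 <;> [linarith; linarith]
  have htri : ∀ {i j : Fin n}, i ≠ j → (B i j ∨ B j i) := by
    intro i j h
    have hsum := marg_add P hP1 h
    have hne := hstrict i j h
    rcases lt_or_gt_of_ne hne with h1 | h1
    · right; rw [hB]; simp only; linarith
    · left; exact h1
  have htrans : ∀ {i j k : Fin n}, B i j → B j k → B i k := by
    intro i j k h1 h2
    have hik : i ≠ k := by
      rintro rfl
      have := marg_add P hP1 (hBne h1)
      rw [hB] at h1 h2; linarith
    have := hST i j k (le_of_lt h1) (le_of_lt h2)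
    exact lt_of_le_of_ne this (Ne.symm (hstrict i k hik))
  -- the defect set
  set S : Fin n → Finset (Fin n) :=
    fun i => Finset.univ.filter (fun j => j ≠ i ∧ pairwiseMarginal P i j < 1 / 2) with hS
  have hSmem : ∀ i k, k ∈ S i ↔ (k ≠ i ∧ B k i) := by
    intro i k
    simp only [hS, Finset.mem_filter, Finset.mem_univ, true_and]
    constructor
    · rintro ⟨hki, h⟩; exact ⟨hki, (htot hki).mpr h⟩
    · rintro ⟨hki, h⟩; exact ⟨hki, (htot hki).mp h⟩
  have hmono : ∀ {i j : Fin n}, B i j → (S i).card < (S j).card := by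
    intro i j hij
    apply Finset.card_lt_card
    constructor
    · intro k hk
      rw [hSmem] at hk
      have hkj : B k j := htrans hk.2 hij
      rw [hSmem]
      exact ⟨hBne hkj, hkj⟩
    · intro hsub
      have : i ∈ S j := (hSmem j i).mpr ⟨hBne hij, hij⟩
      have hi := hsub this
      rw [hSmem] at hi
      exact hi.1 rfl
  have hinj : Function.Injective (copelandRank P) := by
    intro i j hcop
    by_contra hij
    have heq : (S i).card = (S j).card := by
      have : 1 + (S i).card = 1 + (S j).card := hcop
      omega
    rcases htri hij with h | h
    · exact absurd heq (Nat.ne_of_lt (hmono h))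
    · exact absurd heq (Nat.ne_of_gt (hmono h))
  have hmaps : ∀ i : Fin n, copelandRank P i ∈ Set.Icc 1 n := by
    intro i
    have hn : 0 < n := i.pos
    have hsub : S i ⊆ Finset.univ.erase i := by
      intro k hk
      rw [hSmem] at hk
      exact Finset.mem_erase.mpr ⟨hk.1, Finset.mem_univ k⟩
    have hcard : (S i).card ≤ n - 1 := by
      have := Finset.card_le_card hsub
      rwa [Finset.card_erase_of_mem (Finset.mem_univ i), Finset.card_univ,
        Fintype.card_fin] at this
    have : copelandRank P i = 1 + (S i).card := rfl
    simp only [Set.mem_Icc, this]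
    omega
  refine ⟨fun x _ => hmaps x, fun x _ y _ h => hinj h, ?_⟩
  -- surjectivity via cardinality
  intro y hy
  have hT : Finset.image (copelandRank P) Finset.univ = Finset.Icc 1 n := by
    apply Finset.eq_of_subset_of_card_le
    · intro z hz
      rw [Finset.mem_image] at hz
      obtain ⟨x, _, rfl⟩ := hz
      have := hmaps x
      rw [Set.mem_Icc] at this
      exact Finset.mem_Icc.mpr this
    · rw [Finset.card_image_of_injective _ hinj, Finset.card_univ, Fintype.card_fin,
        Nat.card_Icc]
      omega
  have : y ∈ Finset.Icc 1 n := Finset.mem_Icc.mpr (Set.mem_Icc.mp hy)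
  rw [← hT, Finset.mem_image] at this
  obtain ⟨x, _, hx⟩ := this
  exact ⟨x, Set.mem_univ x, hx⟩
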